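/- (Equivalence of 1-liftings and ⋆-liftings.) Let μ₁ ∈ SubDist(A), μ₂ ∈ SubDist(B), R ⊆ A × B, ε, δ ≥ 0. There exists an (ε,δ)-approximate 1-lifting of μ₁ and μ₂ for R if and only if there exists an (ε,δ)-approximate ⋆-lifting of μ₁ and μ₂ for R. -/

import Mathlib

open scoped ENNReal

noncomputable section

def mass {A : Type*} (μ : A → ℝ≥0∞) (X : Set A) : ℝ≥0∞ := ∑' x : X, μ x

def SubDist {A : Type*} (μ : A → ℝ≥0∞) : Prop := mass μ Set.univ ≤ 1

def dpDiv {B : Type*} (ε : ℝ) (μ ν : B → ℝ≥0∞) : ℝ≥0∞ :=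
  ⨆ E : Set B, (mass μ E - ENNReal.ofReal (Real.exp ε) * mass ν E)

def relImage {A B : Type*} (R : A → B → Prop) (X : Set A) : Set B :=
  {b | ∃ a ∈ X, R a b}

def extL {A B : Type*} (η : A × Option B → ℝ≥0∞) : Option A × Option B → ℝ≥0∞ :=
  fun p => p.1.elim 0 (fun a => η (a, p.2))

def extR {A B : Type*} (η : Option A × B → ℝ≥0∞) : Option A × Option B → ℝ≥0∞ :=
  fun p => p.2.elim 0 (fun b => η (p.1, b))

/-- The conditions for a pair `(ηL, ηR)` to witness an `(ε,δ)`-approximate ⋆-lifting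
of `μ₁` and `μ₂` for the relation `R`.  Here `⋆` is represented by `none`. -/
def IsStarWitness {A B : Type*} (ε δ : ℝ) (μ₁ : A → ℝ≥0∞) (μ₂ : B → ℝ≥0∞)
    (R : A → B → Prop) (ηL : A × Option B → ℝ≥0∞) (ηR : Option A × B → ℝ≥0∞) : Prop :=
  SubDist ηL ∧ SubDist ηR ∧
  (∀ a, (∑' b : Option B, ηL (a, b)) = μ₁ a) ∧
  (∀ b, (∑' a : Option A, ηR (a, b)) = μ₂ b) ∧
  (∀ a b, ηL (a, some b) ≠ 0 → R a b) ∧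
  (∀ a b, ηR (some a, b) ≠ 0 → R a b) ∧
  dpDiv ε (extL ηL) (extR ηR) ≤ ENNReal.ofReal δ

/-- Existence of an `(ε,δ)`-approximate ⋆-lifting. -/
def StarLift {A B : Type*} (ε δ : ℝ) (μ₁ : A → ℝ≥0∞) (μ₂ : B → ℝ≥0∞)
    (R : A → B → Prop) : Prop :=
  ∃ ηL ηR, IsStarWitness ε δ μ₁ μ₂ R ηL ηR

/-- Witness conditions for an -approximate 1-lifting. -/
def IsOneWitness {A B : Type*} (ε δ : ℝ) (μ₁ : A → ℝ≥0∞) (μ₂ : B → ℝ≥0∞)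
    (R : A → B → Prop) (μ : A × B → ℝ≥0∞) : Prop :=
  SubDist μ ∧
  (∀ a, (∑' b : B, μ (a, b)) ≤ μ₁ a) ∧
  (∀ b, (∑' a : A, μ (a, b)) ≤ μ₂ b) ∧
  dpDiv ε μ₁ (fun a => ∑' b : B, μ (a, b)) ≤ ENNReal.ofReal δ ∧
  (∀ a b, μ (a, b) ≠ 0 → R a b)

/-- Existence of an -approximate 1-lifting. -/
def OneLift {A B : Type*} (ε δ : ℝ) (μ₁ : A → ℝ≥0∞) (μ₂ : B → ℝ≥0∞)
    (R : A → B → Prop) : Prop :=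
  ∃ μ, IsOneWitness ε δ μ₁ μ₂ R μ


/-!
Given a 1-lifting `μ` with first marginal `π₁`, take `ηR = μ` on `A × B` with the deficit
`μ₂ - π₂` on `⋆`, and rescale row `a` of `μ` to total mass `min (μ₁ a) (e^ε π₁ a)`, the rest
`μ₁ a - e^ε π₁ a` going to `⋆`. The `⋆`-column of `ηL` then costs at most `δ`, and on `A × B`
we have `ηL ≤ e^ε μ = e^ε ηR` pointwise.

Conversely, given `(ηL, ηR)`, take `μ = min ηL ηR` on `A × B`. For `E ⊆ A`, test the ⋆-lifting
on the points `(a, ⋆)` and `(a, b)` with `a ∈ E` and `ηR < ηL`: there `ηR = μ`, on the remaining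
points of the rows `a ∈ E` we have `ηL = μ`, and these are absorbed because `e^ε ≥ 1`.
-/

open Set Function

lemma ENNReal.tsum_option {γ : Type*} (f : Option γ → ℝ≥0∞) :
    ∑' o, f o = f none + ∑' c, f (some c) := by
  rw [ENNReal.tsum_eq_add_tsum_ite none, ← (Option.some_injective γ).tsum_eq]
  · simp
  · rintro (_ | c) h
    · simp at h
    · exact ⟨c, rfl⟩

section Mass

variable {α β : Type*}

lemma mass_eq_tsum_indicator (μ : α → ℝ≥0∞) (X : Set α) : mass μ X = ∑' x, X.indicator μ x :=
  tsum_subtype X μ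

lemma mass_univ (μ : α → ℝ≥0∞) : mass μ univ = ∑' x, μ x :=
  tsum_univ μ

lemma mass_congr {μ ν : α → ℝ≥0∞} {X : Set α} (h : ∀ x ∈ X, μ x = ν x) :
    mass μ X = mass ν X :=
  tsum_congr fun x => h x x.2

lemma mass_mono {μ ν : α → ℝ≥0∞} {X : Set α} (h : ∀ x ∈ X, μ x ≤ ν x) :
    mass μ X ≤ mass ν X :=
  ENNReal.tsum_le_tsum fun x => h x x.2

lemma mass_const_mul (c : ℝ≥0∞) (μ : α → ℝ≥0∞) (X : Set α) :
    mass (fun x => c * μ x) X = c * mass μ X :=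
  ENNReal.tsum_mul_left

lemma mass_inter_add_diff (μ : α → ℝ≥0∞) (X Y : Set α) :
    mass μ (X ∩ Y) + mass μ (X \ Y) = mass μ X := by
  rw [mass, mass, mass, ← ENNReal.summable.tsum_union_disjoint disjoint_sdiff_inter.symm
    ENNReal.summable, inter_union_sdiff]

lemma mass_comp_preimage {g : β → α} (hg : Injective g) (μ : α → ℝ≥0∞) (X : Set α)
    (h : ∀ x ∈ X, μ x ≠ 0 → x ∈ range g) : mass (μ ∘ g) (g ⁻¹' X) = mass μ X := by
  rw [mass_eq_tsum_indicator, mass_eq_tsum_indicator, ← hg.tsum_eq]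
  · rfl
  · intro x hx
    rw [mem_support, indicator_apply_ne_zero] at hx
    exact h x hx.1 hx.2

lemma mass_comp_preimage_le {g : β → α} (hg : Injective g) (μ : α → ℝ≥0∞) (X : Set α) :
    mass (μ ∘ g) (g ⁻¹' X) ≤ mass μ X := by
  rw [mass_eq_tsum_indicator, mass_eq_tsum_indicator]
  exact ENNReal.tsum_comp_le_tsum_of_injective hg (X.indicator μ)

lemma mass_prod_fst (μ : α × β → ℝ≥0∞) (X : Set α) :
    mass (fun a => ∑' b, μ (a, b)) X = mass μ (Prod.fst ⁻¹' X) := by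
  rw [mass_eq_tsum_indicator, mass_eq_tsum_indicator, ENNReal.tsum_prod']
  refine tsum_congr fun a => ?_
  by_cases ha : a ∈ X <;> simp [ha]

lemma mass_prod_option (η : α × Option β → ℝ≥0∞) (X : Set (α × Option β)) :
    mass η X = mass (fun a => η (a, none)) {a | (a, none) ∈ X}
      + mass (fun p : α × β => η (p.1, some p.2)) {p | (p.1, some p.2) ∈ X} := by
  simp only [mass_eq_tsum_indicator, ENNReal.tsum_prod', ← ENNReal.tsum_add]
  refine tsum_congr fun a => ?_
  rw [ENNReal.tsum_option]
  rfl

lemma subDist_of_tsum_fst_le {η : α × β → ℝ≥0∞} {μ : α → ℝ≥0∞}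
    (h : ∀ a, ∑' b, η (a, b) ≤ μ a) (hμ : SubDist μ) : SubDist η := by
  rw [SubDist, mass_univ, ENNReal.tsum_prod']
  exact (ENNReal.tsum_le_tsum h).trans ((mass_univ μ).symm.trans_le hμ)

lemma subDist_of_tsum_snd_le {η : α × β → ℝ≥0∞} {μ : β → ℝ≥0∞}
    (h : ∀ b, ∑' a, η (a, b) ≤ μ b) (hμ : SubDist μ) : SubDist η := by
  rw [SubDist, mass_univ, ENNReal.tsum_prod', ENNReal.tsum_comm]
  exact (ENNReal.tsum_le_tsum h).trans ((mass_univ μ).symm.trans_le hμ)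

end Mass

section DpDiv

variable {α : Type*} {ε : ℝ} {μ ν : α → ℝ≥0∞}

lemma mass_le_dpDiv_add (E : Set α) :
    mass μ E ≤ dpDiv ε μ ν + ENNReal.ofReal (Real.exp ε) * mass ν E :=
  tsub_le_iff_right.1 (le_iSup (fun E => mass μ E - ENNReal.ofReal (Real.exp ε) * mass ν E) E)

lemma dpDiv_le_of_forall_mass_le {d : ℝ≥0∞}
    (h : ∀ E, mass μ E ≤ d + ENNReal.ofReal (Real.exp ε) * mass ν E) : dpDiv ε μ ν ≤ d :=
  iSup_le fun E => tsub_le_iff_right.2 (h E)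

lemma mass_tsub_le_dpDiv (hμ : mass μ univ ≠ ∞) (X : Set α) :
    mass (fun a => μ a - ENNReal.ofReal (Real.exp ε) * ν a) X ≤ dpDiv ε μ ν := by
  set k := ENNReal.ofReal (Real.exp ε)
  set P := {a | k * ν a < μ a}
  have hout : mass (fun a => μ a - k * ν a) (X \ P) = 0 := by
    rw [mass_congr (ν := 0) fun a ha => tsub_eq_zero_of_le (not_lt.1 ha.2)]
    exact tsum_zero
  have hsplit : mass (fun a => μ a - k * ν a) (X ∩ P) + k * mass ν (X ∩ P) = mass μ (X ∩ P) := by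
    rw [← mass_const_mul, mass, mass, mass, ← ENNReal.tsum_add]
    exact tsum_congr fun a => tsub_add_cancel_of_le a.2.2.le
  have hfin : k * mass ν (X ∩ P) ≠ ∞ :=
    ne_top_of_le_ne_top hμ (le_add_self.trans (hsplit.trans_le
      (ENNReal.tsum_mono_subtype μ (subset_univ _))))
  calc mass (fun a => μ a - k * ν a) X = mass (fun a => μ a - k * ν a) (X ∩ P) := by
        rw [← mass_inter_add_diff _ X P, hout, add_zero]
    _ = mass μ (X ∩ P) - k * mass ν (X ∩ P) := ENNReal.eq_sub_of_add_eq hfin hsplit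
    _ ≤ dpDiv ε μ ν := le_iSup (fun E => mass μ E - k * mass ν E) (X ∩ P)

end DpDiv

section Extension

variable {A B : Type*}

lemma mass_extL (η : A × Option B → ℝ≥0∞) (F : Set (Option A × Option B)) :
    mass (extL η) F = mass η (Prod.map some id ⁻¹' F) := by
  refine (mass_comp_preimage ((Option.some_injective A).prodMap injective_id) _ F ?_).symm
  rintro ⟨_ | a, ob⟩ - h
  · exact (h rfl).elim
  · exact ⟨(a, ob), rfl⟩

lemma mass_extR (η : Option A × B → ℝ≥0∞) (F : Set (Option A × Option B)) :
    mass (extR η) F = mass η (Prod.map id some ⁻¹' F) := by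
  refine (mass_comp_preimage (injective_id.prodMap (Option.some_injective B)) _ F ?_).symm
  rintro ⟨oa, _ | b⟩ - h
  · exact (h rfl).elim
  · exact ⟨(oa, b), rfl⟩

end Extension

section StarOfOne

variable {A B : Type*} (ε : ℝ) (μ₁ : A → ℝ≥0∞) (μ₂ : B → ℝ≥0∞) (μ : A × B → ℝ≥0∞)

def starLeftOfOne : A × Option B → ℝ≥0∞
  | (a, none) => μ₁ a - ENNReal.ofReal (Real.exp ε) * ∑' b, μ (a, b)
  | (a, some b) =>
    μ (a, b) * (min (μ₁ a) (ENNReal.ofReal (Real.exp ε) * ∑' b, μ (a, b)) / ∑' b, μ (a, b))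

def starRightOfOne : Option A × B → ℝ≥0∞
  | (none, b) => μ₂ b - ∑' a, μ (a, b)
  | (some a, b) => μ (a, b)

lemma starLeftOfOne_some_le (a : A) (b : B) :
    starLeftOfOne ε μ₁ μ (a, some b) ≤ ENNReal.ofReal (Real.exp ε) * μ (a, b) := by
  rw [mul_comm]
  exact mul_le_mul_right (ENNReal.div_le_of_le_mul (min_le_right _ _)) _

lemma tsum_starLeftOfOne {a : A} (ha : ∑' b, μ (a, b) ≠ ∞) :
    ∑' ob, starLeftOfOne ε μ₁ μ (a, ob) = μ₁ a := by
  rw [ENNReal.tsum_option]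
  simp only [starLeftOfOne]
  rw [ENNReal.tsum_mul_right]
  rcases eq_or_ne (∑' b, μ (a, b)) 0 with h0 | h0
  · simp [h0]
  · rw [ENNReal.mul_div_cancel h0 ha, tsub_add_min]

lemma tsum_starRightOfOne {b : B} (hb : ∑' a, μ (a, b) ≤ μ₂ b) :
    ∑' oa, starRightOfOne μ₂ μ (oa, b) = μ₂ b := by
  rw [ENNReal.tsum_option]
  exact tsub_add_cancel_of_le hb

lemma dpDiv_starOfOne_le (hμ₁ : mass μ₁ univ ≠ ∞) :
    dpDiv ε (extL (starLeftOfOne ε μ₁ μ)) (extR (starRightOfOne μ₂ μ))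
      ≤ dpDiv ε μ₁ (fun a => ∑' b, μ (a, b)) := by
  refine dpDiv_le_of_forall_mass_le fun F => ?_
  rw [mass_extL, mass_prod_option, mass_extR]
  refine add_le_add (mass_tsub_le_dpDiv hμ₁ _) ?_
  calc _ ≤ mass (fun p => ENNReal.ofReal (Real.exp ε) * μ p)
          {p : A × B | (some p.1, some p.2) ∈ F} :=
        mass_mono fun p _ => starLeftOfOne_some_le ε μ₁ μ p.1 p.2
    _ ≤ _ := by
        rw [mass_const_mul]
        gcongr
        exact mass_comp_preimage_le ((Option.some_injective A).prodMap injective_id) _ _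

end StarOfOne

section OneOfStar

variable {A B : Type*} (ηL : A × Option B → ℝ≥0∞) (ηR : Option A × B → ℝ≥0∞)

def oneOfStar : A × B → ℝ≥0∞ :=
  fun p => min (ηL (p.1, some p.2)) (ηR (some p.1, p.2))

lemma dpDiv_oneOfStar_le {ε : ℝ} {μ₁ : A → ℝ≥0∞} (hε : 0 ≤ ε)
    (hL : ∀ a, ∑' ob, ηL (a, ob) = μ₁ a) :
    dpDiv ε μ₁ (fun a => ∑' b, oneOfStar ηL ηR (a, b)) ≤ dpDiv ε (extL ηL) (extR ηR) := by
  refine dpDiv_le_of_forall_mass_le fun E => ?_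
  set k := ENNReal.ofReal (Real.exp ε)
  have hk : 1 ≤ k := ENNReal.one_le_ofReal.2 (Real.one_le_exp hε)
  set S : Set (A × B) := {p | ηR (some p.1, p.2) < ηL (p.1, some p.2)}
  set F : Set (Option A × Option B) :=
    {q | ∃ a ∈ E, q.1 = some a ∧ ∀ b, q.2 = some b → (a, b) ∈ S}
  have hFL : mass (extL ηL) F = mass (fun a => ηL (a, none)) E
      + mass (fun p => ηL (p.1, some p.2)) (Prod.fst ⁻¹' E ∩ S) := by
    rw [mass_extL, mass_prod_option]
    congr 2 <;> ext <;> simp [F]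
  have hFR : mass (extR ηR) F = mass (oneOfStar ηL ηR) (Prod.fst ⁻¹' E ∩ S) := by
    have hF : Prod.map some id ⁻¹' (Prod.map id some ⁻¹' F) = Prod.fst ⁻¹' E ∩ S := by
      ext; simp [F]
    rw [mass_extR, ← mass_comp_preimage ((Option.some_injective A).prodMap injective_id), hF]
    · exact mass_congr fun p hp => (min_eq_right hp.2.le).symm
    · rintro ⟨_ | a, b⟩ ⟨a', -, h, -⟩ -
      · cases h
      · exact ⟨(a, b), rfl⟩
  have hdiff : mass (fun p => ηL (p.1, some p.2)) (Prod.fst ⁻¹' E \ S)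
      = mass (oneOfStar ηL ηR) (Prod.fst ⁻¹' E \ S) :=
    mass_congr fun p hp => (min_eq_left (not_lt.1 hp.2)).symm
  calc mass μ₁ E = mass ηL (Prod.fst ⁻¹' E) := by rw [← mass_prod_fst]; simp only [hL]
    _ = mass (extL ηL) F + mass (oneOfStar ηL ηR) (Prod.fst ⁻¹' E \ S) := by
        rw [mass_prod_option, hFL, ← hdiff, add_assoc, mass_inter_add_diff]
        rfl
    _ ≤ dpDiv ε (extL ηL) (extR ηR) + k * mass (extR ηR) F
        + k * mass (oneOfStar ηL ηR) (Prod.fst ⁻¹' E \ S) :=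
        add_le_add (mass_le_dpDiv_add F) (le_mul_of_one_le_left' hk)
    _ = dpDiv ε (extL ηL) (extR ηR) + k * mass (fun a => ∑' b, oneOfStar ηL ηR (a, b)) E := by
        rw [hFR, add_assoc, ← mul_add, mass_inter_add_diff, mass_prod_fst]

end OneOfStar

section Witnesses

variable {A B : Type*} {ε δ : ℝ} {μ₁ : A → ℝ≥0∞} {μ₂ : B → ℝ≥0∞} {R : A → B → Prop}

lemma IsOneWitness.isStarWitness {μ : A × B → ℝ≥0∞} (h : IsOneWitness ε δ μ₁ μ₂ R μ)
    (h₁ : SubDist μ₁) (h₂ : SubDist μ₂) :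
    IsStarWitness ε δ μ₁ μ₂ R (starLeftOfOne ε μ₁ μ) (starRightOfOne μ₂ μ) := by
  obtain ⟨-, hfst, hsnd, hdp, hR⟩ := h
  have hμ₁ : mass μ₁ univ ≠ ∞ := ne_top_of_le_ne_top ENNReal.one_ne_top h₁
  have hrow (a : A) : ∑' ob, starLeftOfOne ε μ₁ μ (a, ob) = μ₁ a :=
    tsum_starLeftOfOne ε μ₁ μ <| ne_top_of_le_ne_top
      (ENNReal.ne_top_of_tsum_ne_top (by rwa [← mass_univ]) a) (hfst a)
  have hcol (b : B) := tsum_starRightOfOne μ₂ μ (hsnd b)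
  exact ⟨subDist_of_tsum_fst_le (fun a => (hrow a).le) h₁,
    subDist_of_tsum_snd_le (fun b => (hcol b).le) h₂, hrow, hcol,
    fun a b hab => hR a b (left_ne_zero_of_mul hab), hR,
    (dpDiv_starOfOne_le ε μ₁ μ₂ μ hμ₁).trans hdp⟩

lemma IsStarWitness.isOneWitness {ηL : A × Option B → ℝ≥0∞} {ηR : Option A × B → ℝ≥0∞}
    (h : IsStarWitness ε δ μ₁ μ₂ R ηL ηR) (h₁ : SubDist μ₁) (hε : 0 ≤ ε) :
    IsOneWitness ε δ μ₁ μ₂ R (oneOfStar ηL ηR) := by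
  obtain ⟨-, -, hrow, hcol, hRL, -, hdp⟩ := h
  have hfst (a : A) : ∑' b, oneOfStar ηL ηR (a, b) ≤ μ₁ a :=
    calc _ ≤ ∑' b, ηL (a, some b) := ENNReal.tsum_le_tsum fun b => min_le_left _ _
      _ ≤ μ₁ a := hrow a ▸ ENNReal.tsum_comp_le_tsum_of_injective (Option.some_injective B) _
  have hsnd (b : B) : ∑' a, oneOfStar ηL ηR (a, b) ≤ μ₂ b :=
    calc _ ≤ ∑' a, ηR (some a, b) := ENNReal.tsum_le_tsum fun a => min_le_right _ _
      _ ≤ μ₂ b := hcol b ▸ ENNReal.tsum_comp_le_tsum_of_injective (Option.some_injective A) _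
  exact ⟨subDist_of_tsum_fst_le hfst h₁, hfst, hsnd,
    (dpDiv_oneOfStar_le ηL ηR hε hrow).trans hdp,
    fun a b hab => hRL a b (ne_bot_of_le_ne_bot hab (min_le_left _ _))⟩

end Witnesses

theorem oneLift_iff_starLift_general {A B : Type*}
    (μ₁ : A → ℝ≥0∞) (μ₂ : B → ℝ≥0∞) (h₁ : SubDist μ₁) (h₂ : SubDist μ₂)
    (R : A → B → Prop) (ε δ : ℝ) (hε : 0 ≤ ε) :
    OneLift ε δ μ₁ μ₂ R ↔ StarLift ε δ μ₁ μ₂ R :=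
  ⟨fun ⟨_, hμ⟩ => ⟨_, _, hμ.isStarWitness h₁ h₂⟩,
    fun ⟨_, _, hη⟩ => ⟨_, hη.isOneWitness h₁ hε⟩⟩

theorem oneLift_iff_starLift {A B : Type*}
    (μ₁ : A → ℝ≥0∞) (μ₂ : B → ℝ≥0∞) (h₁ : SubDist μ₁) (h₂ : SubDist μ₂)
    (R : A → B → Prop) (ε δ : ℝ) (hε : 0 ≤ ε) (hδ : 0 ≤ δ) :
    OneLift ε δ μ₁ μ₂ R ↔ StarLift ε δ μ₁ μ₂ R :=
  oneLift_iff_starLift_general μ₁ μ₂ h₁ h₂ R ε δ hε
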